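/- arXiv:1706.05429 — 5 statements merged into one kernel-verified Lean document; each statement's English description precedes it below -/
import Mathlib

section
/- Let S be a set of strings each of length ℓ over some alphabet, and let g be a shortest common superstring of S (a shortest string containing every element of S as a substring). Then no string r of length greater than 2ℓ − 2 occurs as a substring of g in two distinct positions; i.e., g contains no repeat of length > 2ℓ − 2. -/
/-- `r` occurs in `g` starting at position `i`. -/
def OccursAt {α : Type*} (r g : List α) (i : ℕ) : Prop :=
  i + r.length ≤ g.length ∧ (g.drop i).take r.length = r

/-- `g` is a common superstring of `S`. -/
def IsCommonSuperstring {α : Type*} (S : Set (List α)) (g : List α) : Prop :=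
  ∀ s ∈ S, s <:+: g

lemma occ_getElem? {α : Type*} {r g : List α} {i : ℕ} (h : OccursAt r g i)
    {k : ℕ} (hk : k < r.length) : g[i+k]? = r[k]? := by
  obtain ⟨h1, h2⟩ := h
  conv_rhs => rw [← h2]
  rw [List.getElem?_take, List.getElem?_drop]
  simp [hk]

lemma occ_of {α : Type*} {s g : List α} {i : ℕ}
    (h1 : i + s.length ≤ g.length)
    (h2 : ∀ k < s.length, g[i+k]? = s[k]?) : OccursAt s g i := by
  refine ⟨h1, List.ext_getElem? fun k => ?_⟩
  rw [List.getElem?_take, List.getElem?_drop]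
  by_cases hk : k < s.length
  · simp [hk, h2 k hk]
  · simp only [hk, if_false]
    symm
    exact List.getElem?_eq_none (by omega)

lemma occ_infix {α : Type*} {s g : List α} {p : ℕ} (h : OccursAt s g p) : s <:+: g := by
  obtain ⟨h1, h2⟩ := h
  rw [← h2]
  exact ((List.take_prefix _ _).isInfix).trans (List.drop_suffix _ _).isInfix

lemma occ_shift {α : Type*} {r g : List α} {i j : ℕ}
    (hi : OccursAt r g i) (hj : OccursAt r g j) (hij : i ≤ j)
    {s : List α} {p : ℕ} (hs : OccursAt s g p)
    (h1 : i ≤ p) (h2 : p + s.length ≤ i + r.length) :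
    OccursAt s g (p + (j - i)) := by
  apply occ_of
  · have := hj.1
    omega
  · intro k hk
    have hm : p - i + k < r.length := by omega
    have e1 : p + (j - i) + k = j + (p - i + k) := by omega
    have e2 : i + (p - i + k) = p + k := by omega
    rw [e1, occ_getElem? hj hm, ← occ_getElem? hi hm, e2, occ_getElem? hs hk]

lemma occ_escape {α : Type*} {r g : List α} {i j : ℕ}
    (hi : OccursAt r g i) (hj : OccursAt r g j) (hij : i < j)
    {ℓ : ℕ} (hℓ : 1 ≤ ℓ) (hL : 2 * ℓ - 1 ≤ r.length)
    {s : List α} (hsl : s.length = ℓ) :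
    ∀ p, OccursAt s g p → i ≤ p → p ≤ i + ℓ - 1 →
      ∃ p', OccursAt s g p' ∧ i + ℓ - 1 < p' := by
  have key : ∀ n p, i + ℓ - 1 - p ≤ n → OccursAt s g p → i ≤ p → p ≤ i + ℓ - 1 →
      ∃ p', OccursAt s g p' ∧ i + ℓ - 1 < p' := by
    intro n
    induction n with
    | zero =>
      intro p hnp hs h1 h2
      refine ⟨p + (j - i), occ_shift hi hj (le_of_lt hij) hs h1 (by omega), by omega⟩
    | succ n ih =>
      intro p hnp hs h1 h2
      have hsh := occ_shift hi hj (le_of_lt hij) hs h1 (by omega)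
      by_cases hc : i + ℓ - 1 < p + (j - i)
      · exact ⟨p + (j - i), hsh, hc⟩
      · exact ih (p + (j - i)) (by omega) hsh (by omega) (by omega)
  intro p
  exact key (i + ℓ - 1 - p) p le_rfl

lemma scs_aux {α : Type*} (S : Set (List α)) (ℓ : ℕ)
    (hlen : ∀ s ∈ S, s.length = ℓ) (g : List α)
    (hcs : IsCommonSuperstring S g)
    (hshortest : ∀ g', IsCommonSuperstring S g' → g.length ≤ g'.length)
    (r : List α) (hr : r.length > 2 * ℓ - 2)
    (i j : ℕ) (hi : OccursAt r g i) (hj : OccursAt r g j) (hij : i < j) : False := by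
  rcases Nat.eq_zero_or_pos ℓ with hℓ0 | hℓ
  · have hnil : IsCommonSuperstring S ([] : List α) := by
      intro s hs
      have h := hlen s hs
      rw [hℓ0] at h
      rw [List.eq_nil_of_length_eq_zero h]
    have h0 := hshortest [] hnil
    simp only [List.length_nil, Nat.le_zero] at h0
    have := hi.1
    omega
  · have hL : 2 * ℓ - 1 ≤ r.length := by omega
    have hrl : ℓ ≤ r.length := by omega
    obtain ⟨q0, hq0⟩ : ∃ q0, q0 = i + ℓ - 1 := ⟨_, rfl⟩
    have hq0len : q0 < g.length := by
      have := hi.1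
      omega
    set g' := g.take q0 ++ g.drop (q0 + 1) with hg'
    have hg'len : g'.length = g.length - 1 := by
      simp [hg', List.length_take, List.length_drop]
      omega
    have hcs' : IsCommonSuperstring S g' := by
      intro s hs
      have hsl := hlen s hs
      obtain ⟨t, u, hg⟩ := hcs s hs
      have hocc : OccursAt s g t.length := by
        constructor
        · rw [← hg]
          simp
        · rw [← hg, List.append_assoc, List.drop_left, List.take_left]
      have hav : ∃ p, OccursAt s g p ∧ (p + ℓ ≤ q0 ∨ q0 < p) := by
        by_cases hc : t.length + ℓ ≤ q0 ∨ q0 < t.length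
        · exact ⟨t.length, hocc, hc⟩
        · push_neg at hc
          obtain ⟨p', hp', hgt⟩ := occ_escape hi hj hij hℓ hL hsl t.length hocc
            (by omega) (by omega)
          exact ⟨p', hp', Or.inr (by omega)⟩
      obtain ⟨p, hp, hcase⟩ := hav
      rcases hcase with hc | hc
      · have hocc' : OccursAt s (g.take q0) p := by
          constructor
          · rw [List.length_take]
            omega
          · rw [List.drop_take, List.take_take]
            have hmin : min s.length (q0 - p) = s.length := by omega
            rw [hmin]
            exact hp.2
        exact (occ_infix hocc').trans (List.prefix_append _ _).isInfix
      · have hocc' : OccursAt s (g.drop (q0 + 1)) (p - (q0 + 1)) := by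
          have hb := hp.1
          constructor
          · rw [List.length_drop]
            omega
          · rw [List.drop_drop]
            have he : q0 + 1 + (p - (q0 + 1)) = p := by omega
            rw [he]
            exact hp.2
        exact (occ_infix hocc').trans (List.suffix_append _ _).isInfix
    have := hshortest g' hcs'
    omega

/-- A shortest common superstring of a set of strings of length ℓ contains no
repeat of length greater than 2ℓ - 2. -/
theorem scs_no_long_repeat {α : Type*} (S : Set (List α)) (ℓ : ℕ)
    (hlen : ∀ s ∈ S, s.length = ℓ) (g : List α)
    (hcs : IsCommonSuperstring S g)
    (hshortest : ∀ g', IsCommonSuperstring S g' → g.length ≤ g'.length)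
    (r : List α) (hr : r.length > 2 * ℓ - 2)
    (i j : ℕ) (hi : OccursAt r g i) (hj : OccursAt r g j) :
    i = j := by
  rcases Nat.lt_trichotomy i j with h | h | h
  · exact (scs_aux S ℓ hlen g hcs hshortest r hr i j hi hj h).elim
  · exact h
  · exact (scs_aux S ℓ hlen g hcs hshortest r hr j i hj hi h).elim
end

section
/- For any finite set S of strings of length ℓ ≥ 2, every shortest common superstring of S has length strictly less than any common superstring of S that contains a repeat of length greater than 2ℓ − 2. -/
private lemma window_infix {α : Type*} (g : List α) (k ℓ : ℕ) :
    (g.drop k).take ℓ <:+: g :=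
  (List.take_prefix ℓ (g.drop k)).isInfix.trans (List.drop_suffix k g).isInfix

private lemma occursAt_drop_eq {α : Type*} {r g : List α} {i : ℕ}
    (h : OccursAt r g i) : g.drop i = r ++ g.drop (i + r.length) := by
  conv_lhs => rw [← List.take_append_drop r.length (g.drop i)]
  rw [h.2, List.drop_drop]

private lemma exists_shorter {α : Type*} (S : Set (List α)) (ℓ : ℕ) (hℓ : 2 ≤ ℓ)
    (hlen : ∀ s ∈ S, s.length = ℓ) (g' : List α) (hg' : IsCommonSuperstring S g')
    (r : List α) (hr : 2 * ℓ - 2 < r.length) (i j : ℕ) (hij : i < j)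
    (hi : OccursAt r g' i) (hj : OccursAt r g' j) :
    ∃ h, IsCommonSuperstring S h ∧ h.length < g'.length := by
  set n := g'.length with hn
  set L := r.length with hL
  have hLn : j + L ≤ n := hj.1
  have hiLn : i + L ≤ n := hi.1
  have hLℓ : 2 * ℓ - 2 < L := hr
  set h : List α := g'.take (j + ℓ - 1) ++ g'.drop (j + L + 1 - ℓ) with hh
  have ei : g'.drop i = r ++ g'.drop (i + L) := occursAt_drop_eq hi
  have ej : g'.drop j = r ++ g'.drop (j + L) := occursAt_drop_eq hj
  have key : ∀ k, k + ℓ ≤ n → (g'.drop k).take ℓ <:+: h := by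
    intro k
    induction k using Nat.strong_induction_on with
    | _ k ih =>
      intro hk
      by_cases h1 : k < j
      · have e : (g'.drop k).take ℓ = ((g'.take (j + ℓ - 1)).drop k).take ℓ := by
          rw [List.drop_take, List.take_take]
          congr 1
          omega
        rw [e]
        exact (window_infix _ _ _).trans (List.prefix_append _ _).isInfix
      · push_neg at h1
        by_cases h2 : k + ℓ ≤ j + L
        · -- shift down by j - i using periodicity
          have e : (g'.drop k).take ℓ = (g'.drop (i + (k - j))).take ℓ := by
            have hk1 : g'.drop k = (g'.drop j).drop (k - j) := by
              rw [List.drop_drop]; try (congr 1; omega)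
            have hk2 : g'.drop (i + (k - j)) = (g'.drop i).drop (k - j) := by
              rw [List.drop_drop]; try (congr 1; omega)
            rw [hk1, hk2, ei, ej,
              List.drop_append_of_le_length (by omega),
              List.drop_append_of_le_length (by omega),
              List.take_append_of_le_length (by simp only [List.length_drop]; try omega),
              List.take_append_of_le_length (by simp only [List.length_drop]; try omega)]
          rw [e]
          exact ih (i + (k - j)) (by omega) (by omega)
        · push_neg at h2
          have e : (g'.drop k).take ℓ =
              ((g'.drop (j + L + 1 - ℓ)).drop (k - (j + L + 1 - ℓ))).take ℓ := by
            rw [List.drop_drop]; congr 2; omega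
          rw [e]
          exact ((List.take_prefix _ _).isInfix.trans
            (List.drop_suffix _ _).isInfix).trans (List.suffix_append _ _).isInfix
  refine ⟨h, ?_, ?_⟩
  · intro s hs
    obtain ⟨t, u, htu⟩ := hg' s hs
    have hsl : s.length = ℓ := hlen s hs
    have e : (g'.drop t.length).take ℓ = s := by
      rw [← htu, List.append_assoc, List.drop_left, ← hsl, List.take_left]
    have hb : t.length + ℓ ≤ n := by
      rw [hn, ← htu]; simp; omega
    rw [← e]
    exact key t.length hb
  · have : h.length = (j + ℓ - 1) + (n - (j + L + 1 - ℓ)) := by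
      rw [hh]
      simp [List.length_take, List.length_drop, ← hn]
      omega
    omega

/-- Every shortest common superstring of a set of strings of length ℓ ≥ 2 is strictly
shorter than any common superstring containing a repeat of length > 2ℓ - 2. -/
theorem scs_shorter_than_repeat_superstring {α : Type*} (S : Set (List α)) (ℓ : ℕ)
    (hℓ : 2 ≤ ℓ) (hlen : ∀ s ∈ S, s.length = ℓ)
    (g g' : List α)
    (hg : IsCommonSuperstring S g)
    (hmin : ∀ h, IsCommonSuperstring S h → g.length ≤ h.length)
    (hg' : IsCommonSuperstring S g')
    (r : List α) (hr : r.length > 2 * ℓ - 2)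
    (i j : ℕ) (hi : OccursAt r g' i) (hj : OccursAt r g' j) (hij : i ≠ j) :
    g.length < g'.length := by
  have main : ∃ h, IsCommonSuperstring S h ∧ h.length < g'.length := by
    rcases lt_or_gt_of_ne hij with hlt | hgt
    · exact exists_shorter S ℓ hℓ hlen g' hg' r hr i j hlt hi hj
    · exact exists_shorter S ℓ hℓ hlen g' hg' r hr j i hgt hj hi
  obtain ⟨h, hsup, hlen'⟩ := main
  exact lt_of_le_of_lt (hmin h hsup) hlen'
end

section
/- In any finite directed graph, the maximal unitigs, viewed as sets of vertices, form a partition of the vertex set, and this partition is unique. -/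
/-- A unitig in a directed graph with edge relation `E`: a nonempty path in which
every vertex except the first has in-degree exactly 1 and every vertex except the
last has out-degree exactly 1. -/
def IsUnitig {V : Type*} (E : V → V → Prop) (p : List V) : Prop :=
  p ≠ [] ∧ p.Nodup ∧ p.Chain' E ∧
  (∀ v ∈ p.tail, ∃! u, E u v) ∧
  (∀ v ∈ p.dropLast, ∃! u, E v u)

/-- A source: a vertex with no incoming edges. -/
def IsSource {V : Type*} (E : V → V → Prop) (v : V) : Prop := ∀ u, ¬ E u v

/-- A sink: a vertex with no outgoing edges. -/
def IsSink {V : Type*} (E : V → V → Prop) (v : V) : Prop := ∀ u, ¬ E v u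

/-- An edge-covering walk: a walk traversing every edge of the graph at least once. -/
def IsECWalk {V : Type*} (E : V → V → Prop) (w : List V) : Prop :=
  w.Chain' E ∧ ∀ u v, E u v → [u, v] <:+: w

/-- A maximal unitig: a unitig that cannot be extended in either direction. -/
def IsMaximalUnitig {V : Type*} (E : V → V → Prop) (p : List V) : Prop :=
  IsUnitig E p ∧ ∀ v : V, ¬ IsUnitig E (v :: p) ∧ ¬ IsUnitig E (p ++ [v])

/-! Call an edge `u → w` a unitig edge if `u` has out-degree one and `w` has in-degree one. Unitig
edges form a partial injection, and a unitig is exactly a duplicate-free chain of unitig edges.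
A maximal unitig is closed under unitig edges in both directions (otherwise it could be
extended, or the partial injection would be violated), so any two maximal unitigs sharing a
vertex contain each other. Every vertex lies on some maximal unitig: a longest unitig through it,
which exists because unitigs have no repeated vertices and the graph is finite. -/

theorem List.isChain_and_forall_dropLast_and_forall_tail_iff {α : Type*} {R : α → α → Prop}
    {P Q : α → Prop} {l : List α} :
    l.IsChain R ∧ (∀ a ∈ l.dropLast, P a) ∧ (∀ b ∈ l.tail, Q b) ↔
      l.IsChain (fun a b => P a ∧ R a b ∧ Q b) := by
  induction l using List.twoStepInduction with
  | nil => simp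
  | singleton => simp
  | cons_cons a b l _ ih =>
    simp only [List.isChain_cons_cons, ← ih, List.dropLast_cons_cons, List.tail_cons,
      List.forall_mem_cons]
    tauto

theorem List.IsChain.forall_mem_of_mem {α : Type*} {R : α → α → Prop} {p : α → Prop}
    {l : List α} (hl : l.IsChain R) (hfwd : ∀ ⦃x y⦄, R x y → p x → p y)
    (hbwd : ∀ ⦃x y⦄, R x y → p y → p x) {a : α} (ha : a ∈ l) (hpa : p a) : ∀ x ∈ l, p x := by
  obtain ⟨l₁, l₂, rfl⟩ := List.append_of_mem ha
  have hsplit := List.isChain_split.1 hl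
  intro x hx
  rcases List.mem_append.1 hx with hx | hx
  · exact hsplit.1.backwards_concat_induction p l₁ hbwd hpa x hx
  · exact hsplit.2.induction p _ hfwd (fun _ => hpa) x hx

section Unitig

variable {V : Type*} {E : V → V → Prop}

variable (E) in
def IsUnitigEdge (u w : V) : Prop := (∃! x, E u x) ∧ E u w ∧ (∃! x, E x w)

theorem IsUnitigEdge.right_unique {u w w' : V} (h : IsUnitigEdge E u w)
    (h' : IsUnitigEdge E u w') : w = w' :=
  h.1.unique h.2.1 h'.2.1

theorem IsUnitigEdge.left_unique {u u' w : V} (h : IsUnitigEdge E u w)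
    (h' : IsUnitigEdge E u' w) : u = u' :=
  h.2.2.unique h.2.1 h'.2.1

theorem isUnitig_iff_isChain_isUnitigEdge {p : List V} :
    IsUnitig E p ↔ p ≠ [] ∧ p.Nodup ∧ p.IsChain (IsUnitigEdge E) := by
  unfold IsUnitig IsUnitigEdge
  rw [← List.isChain_and_forall_dropLast_and_forall_tail_iff]
  tauto

theorem IsUnitig.append_singleton {p : List V} {y z : V} (hp : IsUnitig E p)
    (hy : p.getLast? = some y) (hz : z ∉ p) (hyz : IsUnitigEdge E y z) :
    IsUnitig E (p ++ [z]) := by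
  obtain ⟨-, hnd, hch⟩ := isUnitig_iff_isChain_isUnitigEdge.1 hp
  refine isUnitig_iff_isChain_isUnitigEdge.2 ⟨by simp, ?_, ?_⟩
  · exact hnd.append (List.nodup_singleton z) (by simpa using hz)
  · exact hch.append (List.IsChain.singleton z) (by simpa [hy])

theorem IsUnitig.cons {p : List V} {y z : V} (hp : IsUnitig E p)
    (hy : p.head? = some y) (hz : z ∉ p) (hzy : IsUnitigEdge E z y) :
    IsUnitig E (z :: p) := by
  obtain ⟨-, hnd, hch⟩ := isUnitig_iff_isChain_isUnitigEdge.1 hp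
  exact isUnitig_iff_isChain_isUnitigEdge.2
    ⟨List.cons_ne_nil z p, hnd.cons hz, hch.cons (by simpa [hy])⟩

theorem IsMaximalUnitig.mem_of_mem_of_isUnitigEdge {q : List V} (hq : IsMaximalUnitig E q)
    {y z : V} (hy : y ∈ q) (hyz : IsUnitigEdge E y z) : z ∈ q := by
  by_contra hz
  obtain ⟨l₁, l₂, rfl⟩ := List.append_of_mem hy
  cases l₂ with
  | nil => exact (hq.2 z).2 (hq.1.append_singleton (by simp) hz hyz)
  | cons y' l₂ =>
    have hyy' : IsUnitigEdge E y y' :=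
      (List.isChain_append_cons_cons.1 (isUnitig_iff_isChain_isUnitigEdge.1 hq.1).2.2).2.1
    exact hz (hyy'.right_unique hyz ▸ by simp)

theorem IsMaximalUnitig.mem_of_isUnitigEdge_of_mem {q : List V} (hq : IsMaximalUnitig E q)
    {y z : V} (hzy : IsUnitigEdge E z y) (hy : y ∈ q) : z ∈ q := by
  by_contra hz
  obtain ⟨l₁, l₂, rfl⟩ := List.append_of_mem hy
  rcases List.eq_nil_or_concat' l₁ with rfl | ⟨l₁, x, rfl⟩
  · exact (hq.2 z).1 (hq.1.cons (by simp) hz hzy)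
  · have hxy : IsUnitigEdge E x y :=
      (List.isChain_append_cons_cons.1 (by simpa using
        (isUnitig_iff_isChain_isUnitigEdge.1 hq.1).2.2)).2.1
    exact hz (hxy.left_unique hzy ▸ by simp)

theorem IsMaximalUnitig.subset_of_mem {p q : List V} (hp : IsMaximalUnitig E p)
    (hq : IsMaximalUnitig E q) {a : V} (hap : a ∈ p) (haq : a ∈ q) : p ⊆ q :=
  (isUnitig_iff_isChain_isUnitigEdge.1 hp.1).2.2.forall_mem_of_mem
    (fun _ _ h hx => hq.mem_of_mem_of_isUnitigEdge hx h)
    (fun _ _ h hy => hq.mem_of_isUnitigEdge_of_mem h hy) hap haq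

theorem IsUnitig.length_le_card [Fintype V] {p : List V} (hp : IsUnitig E p) :
    p.length ≤ Fintype.card V :=
  hp.2.1.length_le_card

variable (E) in
theorem exists_isMaximalUnitig_mem [Fintype V] (v : V) :
    ∃ p, IsMaximalUnitig E p ∧ v ∈ p := by
  have hfin : {p | IsUnitig E p ∧ v ∈ p}.Finite :=
    (List.finite_length_le V (Fintype.card V)).subset fun p hp => hp.1.length_le_card
  have hsingleton : IsUnitig E [v] :=
    isUnitig_iff_isChain_isUnitigEdge.2 ⟨by simp, List.nodup_singleton v, .singleton v⟩
  obtain ⟨p, ⟨hp, hvp⟩, hlongest⟩ :=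
    Set.exists_max_image _ List.length hfin ⟨[v], hsingleton, List.mem_singleton_self v⟩
  refine ⟨p, ⟨hp, fun w => ⟨fun hw => ?_, fun hw => ?_⟩⟩, hvp⟩
  · simpa using hlongest _ ⟨hw, List.mem_cons_of_mem w hvp⟩
  · simpa using hlongest _ ⟨hw, List.mem_append_left [w] hvp⟩

end Unitig

/-- In any finite directed graph, the maximal unitigs, viewed as sets of vertices,
form a partition of the vertex set (hence every vertex lies in exactly one block,
so the partition is unique). -/
theorem maximal_unitigs_partition {V : Type*} [Fintype V] (E : V → V → Prop) :
    Setoid.IsPartition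
      {s : Set V | ∃ p : List V, IsMaximalUnitig E p ∧ s = {v | v ∈ p}} := by
  refine ⟨fun ⟨p, hp, hempty⟩ => ?_, fun a => ?_⟩
  · obtain ⟨v, hv⟩ := List.exists_mem_of_ne_nil p hp.1.1
    exact (hempty.symm ▸ hv : v ∈ (∅ : Set V))
  · obtain ⟨p, hp, hap⟩ := exists_isMaximalUnitig_mem E a
    refine ⟨{v | v ∈ p}, ⟨⟨p, hp, rfl⟩, hap⟩, ?_⟩
    rintro s ⟨⟨q, hq, rfl⟩, haq⟩
    exact Set.Subset.antisymm (hq.subset_of_mem hp haq hap) (hp.subset_of_mem hq hap haq)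
end

section
/- Let G be a directed graph, let u = (v_1, ..., v_p) be a unitig in G, and let g be a walk in G that contains v_1 as its i-th vertex with i + p − 1 not exceeding the length of g, such that g does not end before p−1 further steps. If every vertex v_1, ..., v_{p−1} of the unitig has out-degree 1 and g passes through v_1 at position i and g has at least p−1 more steps after position i, then the vertices of g at positions i, i+1, ..., i+p−1 are exactly v_1, v_2, ..., v_p. -/
/-! Each vertex of the unitig other than the last has a unique successor, so a walk standing on it
must step to the next vertex of the unitig; induct along the unitig. -/

namespace List

variable {α : Type*} {R : α → α → Prop}

theorem IsChain.take_length_eq_of_head?_eq {u l : List α} (hu : u.IsChain R)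
    (huniq : ∀ v ∈ u.dropLast, ∀ x y, R v x → R v y → x = y)
    (hl : l.IsChain R) (hlen : u.length ≤ l.length) (hhead : l.head? = u.head?) :
    l.take u.length = u := by
  induction u generalizing l with
  | nil => rfl
  | cons a u ih =>
    obtain _ | ⟨x, l⟩ := l
    · simp at hlen
    obtain rfl : x = a := by simpa using hhead
    obtain _ | ⟨b, u⟩ := u
    · simp
    obtain _ | ⟨y, l⟩ := l
    · simp at hlen
    rw [isChain_cons_cons] at hu hl
    obtain rfl : y = b := huniq x (by simp) y b hl.1 hu.1
    rw [length_cons, take_succ_cons,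
      ih hu.2 (fun v hv => huniq v (by rw [dropLast_cons_cons]; exact mem_cons_of_mem _ hv))
        hl.2 (by simpa using hlen) rfl]

end List

theorem walk_follows_unitig_general {V : Type*} [Inhabited V] (E : V → V → Prop)
    (u g : List V) (i : ℕ)
    (hu : u.Chain' E)
    (hdeg : ∀ v ∈ u.dropLast, ∃! x, E v x)
    (hg : g.Chain' E)
    (hlen : i + u.length ≤ g.length)
    (hstart : g.getI i = u.headI) :
    (g.drop i).take u.length = u := by
  obtain _ | ⟨a, u'⟩ := u
  · rfl
  have hi : i < g.length := by simp only [List.length_cons] at hlen; omega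
  refine hu.take_length_eq_of_head?_eq (fun v hv _ _ => (hdeg v hv).unique) (hg.drop i)
    (by simpa using Nat.le_sub_of_add_le' hlen) ?_
  rw [List.head?_drop, List.getElem?_eq_getElem hi, ← List.getI_eq_getElem _ hi, hstart]
  rfl

/-- If a walk `g` passes through the first vertex of a unitig `u` at position `i`, and
has at least `u.length - 1` further steps, then the vertices of `g` at positions
`i, ..., i + u.length - 1` are exactly the vertices of `u` (using that every vertex of
the unitig except the last has out-degree exactly 1). -/
theorem walk_follows_unitig {V : Type*} [Inhabited V] (E : V → V → Prop)
    (u g : List V) (i : ℕ)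
    (hu : u.Chain' E) (hune : u ≠ [])
    (hdeg : ∀ v ∈ u.dropLast, ∃! x, E v x)
    (hg : g.Chain' E)
    (hlen : i + u.length ≤ g.length)
    (hstart : g.getI i = u.headI) :
    (g.drop i).take u.length = u :=
  walk_follows_unitig_general E u g i hu hdeg hg hlen hstart
end

section
/- For every n ≥ 1, there exists a directed graph G_n (the n-bubble graph) in which the number of distinct shortest edge-covering closed-free walks from the unique source to the unique sink is exactly 2^n. -/
/-- An edge-covering walk from `s` to `t`. -/
def IsECWalkFromTo {V : Type*} (E : V → V → Prop) (s t : V) (w : List V) : Prop :=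
  w.Chain' E ∧ w.head? = some s ∧ w.getLast? = some t ∧
  ∀ u v, E u v → [u, v] <:+: w

section CoveringWalk

variable {V : Type*} {E : V → V → Prop} {w : List V}

theorem List.pair_infix_iff_getElem? {u v : V} :
    [u, v] <:+: w ↔ ∃ p, w[p]? = some u ∧ w[p + 1]? = some v := by
  rw [List.infix_iff_getElem?]
  constructor
  · rintro ⟨k, -, h⟩
    exact ⟨k, by simpa using h 0 (by simp), by simpa [add_comm] using h 1 (by simp)⟩
  · rintro ⟨p, hu, hv⟩
    refine ⟨p, ?_, fun i hi => ?_⟩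
    · have := (List.getElem?_eq_some_iff.mp hv).1
      simp only [List.length_cons, List.length_nil]
      omega
    · simp only [List.length_cons, List.length_nil] at hi
      interval_cases i <;> simp [hu, hv, add_comm]

theorem exists_injective_edge_position (hcov : ∀ u v, E u v → [u, v] <:+: w) :
    ∃ pos : {e : V × V // E e.1 e.2} → Fin (w.length - 1), Function.Injective pos ∧
      ∀ e, w[(pos e : ℕ)]? = some e.1.1 ∧ w[(pos e : ℕ) + 1]? = some e.1.2 := by
  have : ∀ e : {e : V × V // E e.1 e.2}, ∃ p : Fin (w.length - 1),
      w[(p : ℕ)]? = some e.1.1 ∧ w[(p : ℕ) + 1]? = some e.1.2 := fun e => by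
    obtain ⟨p, hu, hv⟩ := List.pair_infix_iff_getElem?.mp (hcov _ _ e.2)
    have := (List.getElem?_eq_some_iff.mp hv).1
    exact ⟨⟨p, by omega⟩, hu, hv⟩
  choose pos hpos using this
  refine ⟨pos, fun e e' h => ?_, hpos⟩
  have h1 := (hpos e).1
  have h2 := (hpos e).2
  rw [h] at h1 h2
  exact Subtype.ext (Prod.ext (Option.some.inj (h1.symm.trans (hpos e').1))
    (Option.some.inj (h2.symm.trans (hpos e').2)))

theorem card_edges_le_length_sub_one (hcov : ∀ u v, E u v → [u, v] <:+: w) :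
    Nat.card {e : V × V // E e.1 e.2} ≤ w.length - 1 := by
  obtain ⟨pos, hinj, -⟩ := exists_injective_edge_position hcov
  simpa using Nat.card_le_card_of_injective pos hinj

theorem eq_of_pair_eq_of_length_le (hcov : ∀ u v, E u v → [u, v] <:+: w)
    (hlen : w.length - 1 ≤ Nat.card {e : V × V // E e.1 e.2}) {p q : ℕ}
    (hp : p + 1 < w.length) (hq : q + 1 < w.length)
    (h : w[p]? = w[q]?) (h' : w[p + 1]? = w[q + 1]?) : p = q := by
  obtain ⟨pos, hinj, hpos⟩ := exists_injective_edge_position hcov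
  have hsurj := (hinj.bijective_of_nat_card_le (by simpa using hlen)).2
  obtain ⟨e, he⟩ := hsurj ⟨p, by omega⟩
  obtain ⟨e', he'⟩ := hsurj ⟨q, by omega⟩
  have hpe := hpos e
  have hqe := hpos e'
  rw [he] at hpe
  rw [he'] at hqe
  have hee : e = e' := Subtype.ext (Prod.ext
    (Option.some.inj (hpe.1.symm.trans (h.trans hqe.1)))
    (Option.some.inj (hpe.2.symm.trans (h'.trans hqe.2))))
  simpa [hee, he'] using congrArg Fin.val he.symm

end CoveringWalk

namespace BubbleGraph

/-- `.inl k` is the junction `J_k` and `.inr (i, b)` the vertex `D_{i,b}`. -/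
abbrev Vertex (n : ℕ) := Fin (n + 2) ⊕ (Fin n × Bool)

def Adj (n : ℕ) : Vertex n → Vertex n → Prop
  | .inl k, .inl m => (m : ℕ) = k + 1
  | .inl k, .inr (i, _) => (k : ℕ) = i + 1
  | .inr (i, _), .inl k => (k : ℕ) = i + 1
  | .inr _, .inr _ => False

variable {n : ℕ}

def level : Vertex n → ℕ
  | .inl k => k
  | .inr (i, _) => i + 1

theorem level_le_of_adj {u v : Vertex n} (h : Adj n u v) : level u ≤ level v := by
  rcases u with k | ⟨i, b⟩ <;> rcases v with m | ⟨j, c⟩ <;> simp only [Adj] at h <;>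
    simp only [level] <;> omega

theorem isSource_iff (v : Vertex n) : IsSource (Adj n) v ↔ v = .inl 0 := by
  refine ⟨fun h => ?_, ?_⟩
  · rcases v with k | ⟨i, b⟩
    · by_contra hk
      have hk0 : (k : ℕ) ≠ 0 := fun h0 => hk (congrArg _ (Fin.ext h0))
      exact h (.inl ⟨k - 1, by omega⟩) (show (k : ℕ) = k - 1 + 1 by omega)
    · exact (h (.inl ⟨i + 1, by omega⟩) rfl).elim
  · rintro rfl (k | ⟨i, b⟩) h <;> simp [Adj] at h

theorem isSink_iff (v : Vertex n) : IsSink (Adj n) v ↔ v = .inl (Fin.last (n + 1)) := by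
  refine ⟨fun h => ?_, ?_⟩
  · rcases v with k | ⟨i, b⟩
    · by_contra hk
      have hk0 : (k : ℕ) ≠ n + 1 := fun h0 => hk (congrArg _ (Fin.ext h0))
      exact h (.inl ⟨k + 1, by omega⟩) rfl
    · exact (h (.inl ⟨i + 1, by omega⟩) rfl).elim
  · rintro rfl (k | ⟨i, b⟩) h <;> simp only [Adj, Fin.val_last] at h <;> omega

theorem eq_of_adj_inr {i : Fin n} {b : Bool} {v : Vertex n} (h : Adj n (.inr (i, b)) v) :
    v = .inl ⟨i + 1, by omega⟩ := by
  rcases v with k | ⟨j, c⟩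
  · exact congrArg _ (Fin.ext h)
  · exact h.elim

theorem eq_of_adj_zero {v : Vertex n} (h : Adj n (.inl 0) v) : v = .inl 1 := by
  rcases v with k | ⟨j, c⟩
  · exact congrArg _ (Fin.ext (by simp only [Adj] at h; simp [h]))
  · simp [Adj] at h

theorem adj_junction_cases {i : ℕ} (hi : i < n) {v : Vertex n}
    (h : Adj n (.inl ⟨i + 1, by omega⟩) v) :
    v = .inl ⟨i + 2, by omega⟩ ∨ ∃ b, v = .inr (⟨i, hi⟩, b) := by
  rcases v with k | ⟨j, c⟩
  · exact .inl (congrArg _ (Fin.ext h))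
  · have hj : j = ⟨i, hi⟩ := Fin.ext (show (j : ℕ) = i by simp only [Adj] at h; omega)
    exact .inr ⟨c, by rw [hj]⟩

/-- The `p`-th vertex of the shortest walk that takes the loop through `D_{i, g i}` before the one
through `D_{i, !g i}`: `J₀, J₁, D_{0, g 0}, J₁, D_{0, !g 0}, J₁, J₂, …`, five steps per bubble. -/
def walkAt (g : Fin n → Bool) (p : ℕ) : Vertex n :=
  if h : p / 5 < n ∧ (p % 5 = 2 ∨ p % 5 = 4) then
    .inr (⟨p / 5, h.1⟩, if p % 5 = 2 then g ⟨p / 5, h.1⟩ else !g ⟨p / 5, h.1⟩)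
  else
    .inl ⟨min (if p % 5 = 0 then p / 5 else p / 5 + 1) (n + 1), by omega⟩

variable {g : Fin n → Bool} {i : ℕ}

theorem walkAt_five_mul (hi : i ≤ n) : walkAt g (5 * i) = .inl ⟨i, by omega⟩ := by
  simp only [walkAt]
  rw [dif_neg (by omega)]
  simp only [Sum.inl.injEq, Fin.mk.injEq]
  split_ifs <;> omega

theorem walkAt_five_mul_add_one (hi : i ≤ n) :
    walkAt g (5 * i + 1) = .inl ⟨i + 1, by omega⟩ := by
  simp only [walkAt]
  rw [dif_neg (by omega)]
  simp only [Sum.inl.injEq, Fin.mk.injEq]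
  split_ifs <;> omega

theorem walkAt_five_mul_add_two (hi : i < n) :
    walkAt g (5 * i + 2) = .inr (⟨i, hi⟩, g ⟨i, hi⟩) := by
  have h5 : (5 * i + 2) / 5 = i := by omega
  simp only [walkAt, h5]
  rw [dif_pos (by omega), if_pos (by omega)]

theorem walkAt_five_mul_add_three (hi : i < n) :
    walkAt g (5 * i + 3) = .inl ⟨i + 1, by omega⟩ := by
  simp only [walkAt]
  rw [dif_neg (by omega)]
  simp only [Sum.inl.injEq, Fin.mk.injEq]
  split_ifs <;> omega

theorem walkAt_five_mul_add_four (hi : i < n) :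
    walkAt g (5 * i + 4) = .inr (⟨i, hi⟩, !g ⟨i, hi⟩) := by
  have h5 : (5 * i + 4) / 5 = i := by omega
  simp only [walkAt, h5]
  rw [dif_pos (by omega), if_neg (by omega)]

theorem adj_walkAt {p : ℕ} (hp : p < 5 * n + 1) : Adj n (walkAt g p) (walkAt g (p + 1)) := by
  obtain ⟨i, r, hr, rfl⟩ : ∃ i r, r < 5 ∧ p = 5 * i + r := ⟨p / 5, p % 5, by omega, by omega⟩
  interval_cases r
  · rw [Nat.add_zero, walkAt_five_mul (by omega), walkAt_five_mul_add_one (by omega)]; rfl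
  · rw [walkAt_five_mul_add_one (by omega), walkAt_five_mul_add_two (by omega)]; rfl
  · rw [walkAt_five_mul_add_two (by omega), walkAt_five_mul_add_three (by omega)]; rfl
  · rw [walkAt_five_mul_add_three (by omega), walkAt_five_mul_add_four (by omega)]; rfl
  · rw [walkAt_five_mul_add_four (by omega), show 5 * i + 4 + 1 = 5 * (i + 1) by ring,
      walkAt_five_mul (by omega)]; rfl

theorem exists_walkAt_eq_of_adj {u v : Vertex n} (h : Adj n u v) :
    ∃ p < 5 * n + 1, walkAt g p = u ∧ walkAt g (p + 1) = v := by
  rcases u with k | ⟨i, b⟩ <;> rcases v with m | ⟨j, c⟩ <;> simp only [Adj] at h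
  · exact ⟨5 * k, by omega, by rw [walkAt_five_mul (by omega)], by
      rw [walkAt_five_mul_add_one (by omega)]; exact congrArg _ (Fin.ext h.symm)⟩
  · have hk : walkAt g (5 * j + 1) = .inl k := by
      rw [walkAt_five_mul_add_one (by omega)]; exact congrArg _ (Fin.ext h.symm)
    have hk' : walkAt g (5 * j + 3) = .inl k := by
      rw [walkAt_five_mul_add_three j.2]; exact congrArg _ (Fin.ext h.symm)
    rcases Bool.eq_or_eq_not c (g j) with rfl | rfl
    · exact ⟨5 * j + 1, by omega, hk, walkAt_five_mul_add_two j.2⟩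
    · exact ⟨5 * j + 3, by omega, hk', walkAt_five_mul_add_four j.2⟩
  · have hm : walkAt g (5 * i + 3) = .inl m := by
      rw [walkAt_five_mul_add_three i.2]; exact congrArg _ (Fin.ext h.symm)
    have hm' : walkAt g (5 * i + 4 + 1) = .inl m := by
      rw [show 5 * (i : ℕ) + 4 + 1 = 5 * (i + 1) by ring, walkAt_five_mul (by omega)]
      exact congrArg _ (Fin.ext h.symm)
    rcases Bool.eq_or_eq_not b (g i) with rfl | rfl
    · exact ⟨5 * i + 2, by omega, walkAt_five_mul_add_two i.2, hm⟩
    · exact ⟨5 * i + 4, by omega, walkAt_five_mul_add_four i.2, hm'⟩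

def walk (g : Fin n → Bool) : List (Vertex n) :=
  List.ofFn fun p : Fin (5 * n + 2) => walkAt g p

theorem length_walk : (walk g).length = 5 * n + 2 := List.length_ofFn

theorem getElem?_walk {p : ℕ} (hp : p < 5 * n + 2) : (walk g)[p]? = some (walkAt g p) := by
  rw [walk, List.getElem?_ofFn]
  simp [hp]

theorem walk_isECWalk (g : Fin n → Bool) :
    IsECWalkFromTo (Adj n) (.inl 0) (.inl (Fin.last (n + 1))) (walk g) := by
  refine ⟨?_, ?_, ?_, fun u v h => ?_⟩
  · rw [List.Chain', List.isChain_iff_getElem]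
    intro p hp
    simp only [walk, List.getElem_ofFn]
    exact adj_walkAt (by simpa [walk] using hp)
  · rw [List.head?_eq_getElem?, getElem?_walk (by omega), ← Nat.mul_zero 5,
      walkAt_five_mul (Nat.zero_le n)]
    rfl
  · rw [List.getLast?_eq_getElem?, length_walk, show 5 * n + 2 - 1 = 5 * n + 1 by omega,
      getElem?_walk (by omega), walkAt_five_mul_add_one le_rfl]
    rfl
  · obtain ⟨p, hp, hu, hv⟩ := exists_walkAt_eq_of_adj (g := g) h
    exact List.pair_infix_iff_getElem?.mpr ⟨p, by rw [getElem?_walk (by omega), hu],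
      by rw [getElem?_walk (by omega), hv]⟩

theorem five_mul_add_one_le_card_edges :
    5 * n + 1 ≤ Nat.card {e : Vertex n × Vertex n // Adj n e.1 e.2} := by
  let f : Fin (n + 1) ⊕ (Fin n × Bool) ⊕ (Fin n × Bool) →
      {e : Vertex n × Vertex n // Adj n e.1 e.2}
    | .inl k => ⟨(.inl k.castSucc, .inl k.succ), by simp [Adj]⟩
    | .inr (.inl (i, b)) => ⟨(.inl ⟨i + 1, by omega⟩, .inr (i, b)), rfl⟩
    | .inr (.inr (i, b)) => ⟨(.inr (i, b), .inl ⟨i + 1, by omega⟩), rfl⟩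
  have hf : Function.Injective f := by
    rintro (k | ⟨i, b⟩ | ⟨i, b⟩) (k' | ⟨i', b'⟩ | ⟨i', b'⟩) h <;>
      simp_all [f, Subtype.ext_iff, Fin.ext_iff]
  calc 5 * n + 1 = Nat.card (Fin (n + 1) ⊕ (Fin n × Bool) ⊕ (Fin n × Bool)) := by
        simp only [Nat.card_eq_fintype_card, Fintype.card_sum, Fintype.card_fin,
          Fintype.card_prod, Fintype.card_bool]
        ring
    _ ≤ _ := Nat.card_le_card_of_injective f hf

theorem five_mul_add_two_le_length {s t : Vertex n} {w : List (Vertex n)}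
    (hw : IsECWalkFromTo (Adj n) s t w) : 5 * n + 2 ≤ w.length := by
  have := card_edges_le_length_sub_one hw.2.2.2
  have := five_mul_add_one_le_card_edges (n := n)
  omega

/-- `W p` is the `p`-th vertex of a walk from `J₀` traversing each of the `5n+1` edges exactly
once. -/
structure IsEulerian (W : ℕ → Vertex n) : Prop where
  zero : W 0 = .inl 0
  adj : ∀ p < 5 * n + 1, Adj n (W p) (W (p + 1))
  covers : ∀ u v, Adj n u v → ∃ p < 5 * n + 1, W p = u ∧ W (p + 1) = v
  injective : ∀ p < 5 * n + 1, ∀ q < 5 * n + 1, W p = W q → W (p + 1) = W (q + 1) → p = q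

theorem isEulerian_getD {t : Vertex n} {w : List (Vertex n)}
    (hw : IsECWalkFromTo (Adj n) (.inl 0) t w) (hlen : w.length = 5 * n + 2) :
    IsEulerian fun p => w.getD p (.inl 0) := by
  have hget : ∀ p < 5 * n + 2, w[p]? = some (w.getD p (.inl 0)) := fun p hp => by
    rw [List.getD_eq_getElem _ _ (by omega)]
    exact List.getElem?_eq_getElem _
  refine ⟨?_, fun p hp => ?_, fun u v h => ?_, fun p hp q hq h h' => ?_⟩
  · have := hw.2.1
    rw [List.head?_eq_getElem?, hget 0 (by omega)] at this
    exact Option.some.inj this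
  · rw [List.getD_eq_getElem _ _ (by omega), List.getD_eq_getElem _ _ (by omega)]
    exact List.IsChain.getElem hw.1 p (by omega)
  · obtain ⟨p, hu, hv⟩ := List.pair_infix_iff_getElem?.mp (hw.2.2.2 u v h)
    have hp := (List.getElem?_eq_some_iff.mp hv).1
    exact ⟨p, by omega, Option.some.inj ((hget p (by omega)).symm.trans hu),
      Option.some.inj ((hget (p + 1) (by omega)).symm.trans hv)⟩
  · refine eq_of_pair_eq_of_length_le hw.2.2.2 ?_ (by omega) (by omega) ?_ ?_
    · have := five_mul_add_one_le_card_edges (n := n)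
      omega
    · rw [hget p (by omega), hget q (by omega), h]
    · rw [hget (p + 1) (by omega), hget (q + 1) (by omega), h']

namespace IsEulerian

variable {W : ℕ → Vertex n}

theorem level_le (hW : IsEulerian W) {p q : ℕ} (hpq : p ≤ q) (hq : q ≤ 5 * n + 1) :
    level (W p) ≤ level (W q) := by
  induction q, hpq using Nat.le_induction with
  | base => exact le_rfl
  | succ q _ ih => exact (ih (by omega)).trans (level_le_of_adj (hW.adj q (by omega)))

/-- Levels never decrease, so once the walk has reached `J_{i+2}` it can no longer traverse the
loops of bubble `i`. -/
theorem exists_lt_of_apply_add_one_eq (hW : IsEulerian W) (hi : i < n) {q : ℕ}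
    (h' : W (q + 1) = .inl ⟨i + 2, by omega⟩) (b : Bool) :
    ∃ m < q, W m = .inl ⟨i + 1, by omega⟩ ∧ W (m + 1) = .inr (⟨i, hi⟩, b) := by
  obtain ⟨m, hm, hm1, hm2⟩ := hW.covers (.inl ⟨i + 1, by omega⟩) (.inr (⟨i, hi⟩, b)) rfl
  refine ⟨m, lt_of_not_ge fun hqm => ?_, hm1, hm2⟩
  rcases hqm.eq_or_lt with rfl | hqm
  · simp [h'] at hm2
  · have := hW.level_le (p := q + 1) (q := m) (by omega) (by omega)
    simp [h', hm1, level] at this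

theorem ne_of_le (hW : IsEulerian W) {k q m : ℕ} (hk : k ≤ n) (h : W q = .inl ⟨k, by omega⟩)
    (hm : m ≤ q) (hq : q ≤ 5 * n + 1) : W m ≠ .inl ⟨k + 1, by omega⟩ := fun h' => by
  have := hW.level_le hm hq
  simp [h, h', level] at this

theorem first_loop (hW : IsEulerian W) (hi : i < n) (h0 : W (5 * i) = .inl ⟨i, by omega⟩)
    (h1 : W (5 * i + 1) = .inl ⟨i + 1, by omega⟩) :
    ∃ c, W (5 * i + 2) = .inr (⟨i, hi⟩, c) ∧ W (5 * i + 3) = .inl ⟨i + 1, by omega⟩ := by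
  obtain ⟨c, h2⟩ : ∃ c, W (5 * i + 2) = .inr (⟨i, hi⟩, c) := by
    have := hW.adj (5 * i + 1) (by omega)
    rw [h1] at this
    refine (adj_junction_cases hi this).resolve_left fun h2 => ?_
    obtain ⟨m, hm, hm1, -⟩ := hW.exists_lt_of_apply_add_one_eq hi h2 true
    exact hW.ne_of_le hi.le h0 (by omega) (by omega) hm1
  have := hW.adj (5 * i + 2) (by omega)
  rw [h2] at this
  exact ⟨c, h2, eq_of_adj_inr this⟩

theorem second_loop (hW : IsEulerian W) (hi : i < n) {c : Bool}
    (h0 : W (5 * i) = .inl ⟨i, by omega⟩) (h1 : W (5 * i + 1) = .inl ⟨i + 1, by omega⟩)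
    (h2 : W (5 * i + 2) = .inr (⟨i, hi⟩, c)) (h3 : W (5 * i + 3) = .inl ⟨i + 1, by omega⟩) :
    W (5 * i + 4) = .inr (⟨i, hi⟩, !c) ∧ W (5 * i + 5) = .inl ⟨i + 1, by omega⟩ ∧
      W (5 * i + 6) = .inl ⟨i + 2, by omega⟩ := by
  have h4 : W (5 * i + 4) = .inr (⟨i, hi⟩, !c) := by
    have := hW.adj (5 * i + 3) (by omega)
    rw [h3] at this
    rcases adj_junction_cases hi this with h4 | ⟨c', h4⟩
    · obtain ⟨m, hm, hm1, hm2⟩ := hW.exists_lt_of_apply_add_one_eq hi h4 (!c)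
      rcases (show m ≤ 5 * i ∨ m = 5 * i + 1 ∨ m = 5 * i + 2 by omega) with hm | rfl | rfl
      · exact (hW.ne_of_le hi.le h0 hm (by omega) hm1).elim
      · simp [h2] at hm2
      · simp [h2] at hm1
    · rcases Bool.eq_or_eq_not c' c with rfl | rfl
      · have := hW.injective _ (by omega) _ (by omega) (h1.trans h3.symm) (h2.trans h4.symm)
        omega
      · exact h4
  have h5 : W (5 * i + 5) = .inl ⟨i + 1, by omega⟩ := by
    have := hW.adj (5 * i + 4) (by omega)
    rw [h4] at this
    exact eq_of_adj_inr this
  refine ⟨h4, h5, ?_⟩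
  have := hW.adj (5 * i + 5) (by omega)
  rw [h5] at this
  rcases adj_junction_cases hi this with h6 | ⟨c', h6⟩
  · exact h6
  · rcases Bool.eq_or_eq_not c' c with rfl | rfl
    · have := hW.injective _ (by omega) _ (by omega) (h1.trans h5.symm) (h2.trans h6.symm)
      omega
    · have := hW.injective _ (by omega) _ (by omega) (h3.trans h5.symm) (h4.trans h6.symm)
      omega

theorem junction (hW : IsEulerian W) (hi : i ≤ n) :
    W (5 * i) = .inl ⟨i, by omega⟩ ∧ W (5 * i + 1) = .inl ⟨i + 1, by omega⟩ := by
  induction i with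
  | zero =>
    have := hW.adj 0 (by omega)
    rw [hW.zero] at this
    exact ⟨hW.zero, eq_of_adj_zero this⟩
  | succ i ih =>
    obtain ⟨h0, h1⟩ := ih (by omega)
    obtain ⟨c, h2, h3⟩ := hW.first_loop (by omega) h0 h1
    exact (hW.second_loop (by omega) h0 h1 h2 h3).2

theorem eq_walkAt (hW : IsEulerian W) {p : ℕ} (hp : p < 5 * n + 2) :
    W p = walkAt (fun i => decide (W (5 * i + 2) = .inr (i, true))) p := by
  obtain ⟨i, r, hr, rfl⟩ : ∃ i r, r < 5 ∧ p = 5 * i + r := ⟨p / 5, p % 5, by omega, by omega⟩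
  interval_cases r
  · rw [Nat.add_zero, walkAt_five_mul (by omega), (hW.junction (by omega)).1]
  · rw [walkAt_five_mul_add_one (by omega), (hW.junction (by omega)).2]
  all_goals
    have hi : i < n := by omega
    obtain ⟨h0, h1⟩ := hW.junction hi.le
    obtain ⟨c, h2, h3⟩ := hW.first_loop hi h0 h1
    have h4 := (hW.second_loop hi h0 h1 h2 h3).1
  · rw [walkAt_five_mul_add_two hi]
    simp [h2]
  · rw [walkAt_five_mul_add_three hi, h3]
  · rw [walkAt_five_mul_add_four hi]
    simp [h2, h4]

end IsEulerian

theorem exists_eq_walk {t : Vertex n} {w : List (Vertex n)}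
    (hw : IsECWalkFromTo (Adj n) (.inl 0) t w) (hlen : w.length = 5 * n + 2) :
    ∃ g, w = walk g := by
  have hW := isEulerian_getD hw hlen
  refine ⟨fun i => decide (w.getD (5 * i + 2) (.inl 0) = .inr (i, true)),
    List.ext_getElem (by rw [hlen, length_walk]) fun p hp _ => ?_⟩
  simp only [walk, List.getElem_ofFn]
  rw [← hW.eq_walkAt (by omega), List.getD_eq_getElem]

theorem walk_injective : Function.Injective (walk (n := n)) := by
  intro g g' h
  funext i
  have := congrArg (·[5 * (i : ℕ) + 2]?) h
  simpa [getElem?_walk (show 5 * (i : ℕ) + 2 < 5 * n + 2 by omega),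
    walkAt_five_mul_add_two i.2] using this

theorem setOf_isShortest_eq_range :
    {w : List (Vertex n) | IsECWalkFromTo (Adj n) (.inl 0) (.inl (Fin.last (n + 1))) w ∧
      ∀ w', IsECWalkFromTo (Adj n) (.inl 0) (.inl (Fin.last (n + 1))) w' →
        w.length ≤ w'.length} = Set.range walk := by
  ext w
  constructor
  · rintro ⟨hw, hmin⟩
    have hle := hmin _ (walk_isECWalk fun _ => true)
    rw [length_walk] at hle
    exact (exists_eq_walk hw (hle.antisymm (five_mul_add_two_le_length hw))).imp fun _ => Eq.symm
  · rintro ⟨g, rfl⟩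
    exact ⟨walk_isECWalk g, fun w' hw' => length_walk ▸ five_mul_add_two_le_length hw'⟩

end BubbleGraph

theorem bubble_graph_exponential_solutions_general (n : ℕ) :
    ∃ (V : Type) (_ : Fintype V) (E : V → V → Prop) (s t : V),
      (∀ v, IsSource E v ↔ v = s) ∧
      (∀ v, IsSink E v ↔ v = t) ∧
      (∃ w, IsECWalkFromTo E s t w) ∧
      {w : List V | IsECWalkFromTo E s t w ∧
          ∀ w', IsECWalkFromTo E s t w' → w.length ≤ w'.length}.ncard = 2 ^ n := by
  refine ⟨BubbleGraph.Vertex n, inferInstance, BubbleGraph.Adj n, .inl 0, .inl (Fin.last (n + 1)),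
    BubbleGraph.isSource_iff, BubbleGraph.isSink_iff,
    ⟨_, BubbleGraph.walk_isECWalk fun _ => true⟩, ?_⟩
  rw [BubbleGraph.setOf_isShortest_eq_range,
    Set.ncard_range_of_injective BubbleGraph.walk_injective]
  simp

/-- For every n ≥ 1 there is a finite directed graph (the n-bubble graph) with a
unique source and a unique sink in which the number of distinct shortest
edge-covering walks from the source to the sink is exactly 2^n. -/
theorem bubble_graph_exponential_solutions (n : ℕ) (hn : 1 ≤ n) :
    ∃ (V : Type) (_ : Fintype V) (E : V → V → Prop) (s t : V),
      (∀ v, IsSource E v ↔ v = s) ∧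
      (∀ v, IsSink E v ↔ v = t) ∧
      (∃ w, IsECWalkFromTo E s t w) ∧
      {w : List V | IsECWalkFromTo E s t w ∧
          ∀ w', IsECWalkFromTo E s t w' → w.length ≤ w'.length}.ncard = 2 ^ n :=
  bubble_graph_exponential_solutions_general n
end
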